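/- Let α ∈ {1, 9/7} and define h(ω) = 2 + 2cos(ω) + ω·sin(ω)·(1 − 2απ). Then: (a) h has exactly one zero in the open interval (0,π), and this zero lies in [π/6, π/2]; (b) h((2k−1)π) = 0 for every integer k ≥ 1; (c) for every integer k ≥ 1, h has exactly one zero in the open interval ((2k−1)π, (2k+1)π), and this zero lies in [2kπ, (2k+½)π]. Consequently the set of ω > 0 with h(ω) = 0 consists exactly of the zeros listed in (a), (b), (c). -/

import Mathlib

/-!
Writing `c = 1 − 2απ`, the double-angle formulas factor `h(t + 2kπ) = 2 cos(t/2) · F(t)` with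
`F(t) = 2 cos(t/2) + c (t + 2kπ) sin(t/2)`. On `(−π, π)` the first factor is positive, so the zeros
of `h` there are those of `F`. For `c < 0`, `F` is strictly decreasing on `[0, π]`, positive at
`π/6` (`k = 0`) resp. at `0` (`k ≥ 1`) and negative at `π/2`; for `k ≥ 1` it is moreover positive on
`(−π, 0]`, since there `t + 2kπ > 0` and `sin(t/2) ≤ 0`. The points `(2k − 1)π` are zeros of
`1 + cos`, and `sin`, hence of `h`.
-/

open Real Set

/-- The transcendental function `h(ω) = 2 + 2cos(ω) + ω·sin(ω)·(1 − 2απ)`. -/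
noncomputable def hZero (α ω : ℝ) : ℝ := 2 + 2 * Real.cos ω + ω * Real.sin ω * (1 - 2 * α * π)

/-- The cofactor `F` of the header, with `a = 2kπ`. -/
noncomputable def hZeroCofactor (c a t : ℝ) : ℝ := 2 * cos (t / 2) + c * (t + a) * sin (t / 2)

theorem existsUnique_and_forall_mem_of_forall_iff {β : Type*} {S T : Set β} {P : β → Prop}
    {x₀ : β} (hS : x₀ ∈ S) (hT : x₀ ∈ T) (h : ∀ x ∈ S, P x ↔ x = x₀) :
    (∃! x, x ∈ S ∧ P x) ∧ ∀ x ∈ S, P x → x ∈ T :=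
  ⟨⟨x₀, ⟨hS, (h x₀ hS).2 rfl⟩, fun x hx => (h x hx.1).1 hx.2⟩,
    fun x hx hPx => (h x hx).1 hPx ▸ hT⟩

theorem StrictAntiOn.exists_mem_Ioo_forall_eq_zero_iff {f : ℝ → ℝ} {a b p q : ℝ}
    (hanti : StrictAntiOn f (Icc a b)) (hcont : ContinuousOn f (Icc a b))
    (hap : a ≤ p) (hpq : p < q) (hqb : q ≤ b) (hfp : 0 < f p) (hfq : f q < 0) :
    ∃ x₀ ∈ Ioo p q, ∀ x ∈ Icc a b, f x = 0 ↔ x = x₀ := by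
  obtain ⟨x₀, hx₀, hfx₀⟩ := intermediate_value_Ioo' hpq.le
    (hcont.mono (Icc_subset_Icc hap hqb)) ⟨hfq, hfp⟩
  have hx₀ab : x₀ ∈ Icc a b := ⟨by linarith [hx₀.1], by linarith [hx₀.2]⟩
  refine ⟨x₀, hx₀, fun x hx => ⟨fun hfx => hanti.injOn hx hx₀ab (hfx.trans hfx₀.symm), ?_⟩⟩
  rintro rfl
  exact hfx₀

theorem exists_odd_mul_pi_le_lt_odd_mul_pi {ω : ℝ} (hω : π ≤ ω) :
    ∃ k : ℕ, 1 ≤ k ∧ (2 * (k : ℝ) - 1) * π ≤ ω ∧ ω < (2 * (k : ℝ) + 1) * π := by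
  have hr : 1 ≤ ω / π := (one_le_div pi_pos).2 hω
  refine ⟨⌊(ω / π + 1) / 2⌋₊, Nat.le_floor (by norm_num; linarith), ?_, ?_⟩
  · have := Nat.floor_le (show 0 ≤ (ω / π + 1) / 2 by positivity)
    rw [← le_div_iff₀ pi_pos]
    linarith
  · have := Nat.lt_floor_add_one ((ω / π + 1) / 2)
    rw [← div_lt_iff₀ pi_pos]
    linarith

theorem hZero_odd_mul_pi (α : ℝ) (k : ℕ) : hZero α ((2 * k - 1) * π) = 0 := by
  have h : (2 * k - 1) * π = k * (2 * π) - π := by ring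
  rw [hZero, h, cos_nat_mul_two_pi_sub_pi, sin_nat_mul_two_pi_sub, sin_pi]
  ring

theorem hZero_add_two_mul_nat_mul_pi (α t : ℝ) (k : ℕ) :
    hZero α (t + 2 * k * π) = 2 * cos (t / 2) * hZeroCofactor (1 - 2 * α * π) (2 * k * π) t := by
  have hcos : cos t = 2 * cos (t / 2) ^ 2 - 1 := by
    rw [← cos_two_mul, mul_div_cancel₀ t two_ne_zero]
  have hsin : sin t = 2 * sin (t / 2) * cos (t / 2) := by
    rw [← sin_two_mul, mul_div_cancel₀ t two_ne_zero]
  have hk : t + 2 * k * π = t + k * (2 * π) := by ring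
  rw [hZero, hk, cos_add_nat_mul_two_pi, sin_add_nat_mul_two_pi, hZeroCofactor, hcos, hsin]
  ring

theorem hZero_add_two_mul_nat_mul_pi_eq_zero_iff (α : ℝ) (k : ℕ) {t : ℝ} (ht : t ∈ Ioo (-π) π) :
    hZero α (t + 2 * k * π) = 0 ↔ hZeroCofactor (1 - 2 * α * π) (2 * k * π) t = 0 := by
  have hcos : 0 < cos (t / 2) := cos_pos_of_mem_Ioo ⟨by linarith [ht.1], by linarith [ht.2]⟩
  rw [hZero_add_two_mul_nat_mul_pi, mul_eq_zero_iff_left (by positivity)]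

section hZeroCofactor

variable {c a : ℝ}

theorem hasDerivAt_hZeroCofactor (c a t : ℝ) :
    HasDerivAt (hZeroCofactor c a)
      ((c - 1) * sin (t / 2) + c * (t + a) * cos (t / 2) / 2) t := by
  have hhalf : HasDerivAt (fun t : ℝ => t / 2) (1 / 2) t := (hasDerivAt_id t).div_const 2
  have hlin : HasDerivAt (fun t : ℝ => c * (t + a)) c t := by
    simpa using ((hasDerivAt_id t).add_const a).const_mul c
  have hcos : HasDerivAt (fun t : ℝ => cos (t / 2)) (-sin (t / 2) * (1 / 2)) t :=
    (hasDerivAt_cos _).comp t hhalf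
  have hsin : HasDerivAt (fun t : ℝ => sin (t / 2)) (cos (t / 2) * (1 / 2)) t :=
    (hasDerivAt_sin _).comp t hhalf
  exact ((hcos.const_mul 2).add (hlin.mul hsin)).congr_deriv (by ring)

theorem continuous_hZeroCofactor (c a : ℝ) : Continuous (hZeroCofactor c a) := by
  unfold hZeroCofactor
  fun_prop

theorem hZeroCofactor_zero : hZeroCofactor c a 0 = 2 := by
  simp [hZeroCofactor]

theorem strictAntiOn_hZeroCofactor (hc : c < 0) (ha : 0 ≤ a) :
    StrictAntiOn (hZeroCofactor c a) (Icc 0 π) := by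
  refine strictAntiOn_of_deriv_neg (convex_Icc 0 π) (continuous_hZeroCofactor c a).continuousOn
    fun t ht => ?_
  rw [interior_Icc] at ht
  rw [(hasDerivAt_hZeroCofactor c a t).deriv]
  have hsin : 0 < sin (t / 2) :=
    sin_pos_of_pos_of_lt_pi (by linarith [ht.1]) (by linarith [ht.2, pi_pos])
  have hcos : 0 < cos (t / 2) :=
    cos_pos_of_mem_Ioo ⟨by linarith [ht.1, pi_pos], by linarith [ht.2]⟩
  have hta : 0 < t + a := by linarith [ht.1]
  nlinarith [mul_pos hsin (show 0 < 1 - c by linarith), mul_pos (mul_pos (neg_pos.2 hc) hta) hcos]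

theorem hZeroCofactor_pi_div_two_neg (hc : c ≤ 1 - 2 * π) (ha : 0 ≤ a) :
    hZeroCofactor c a (π / 2) < 0 := by
  have hsqrt : 0 < √2 := by positivity
  have hca : c * (π / 2 + a) < -2 := by
    nlinarith [mul_nonpos_of_nonpos_of_nonneg (show c ≤ 0 by linarith [pi_gt_three]) ha,
      pi_gt_three]
  rw [hZeroCofactor, show π / 2 / 2 = π / 4 by ring, sin_pi_div_four, cos_pi_div_four]
  nlinarith

theorem hZeroCofactor_pi_div_six_pos (hc₀ : c ≤ 0) (hc : 1 - 18 * π / 7 ≤ c) :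
    0 < hZeroCofactor c 0 (π / 6) := by
  have hpi := pi_gt_three
  have hpi' : π < 3.15 := pi_lt_d2
  have hcos : √3 / 2 ≤ cos (π / 12) := by
    rw [← cos_pi_div_six]
    exact cos_le_cos_of_nonneg_of_le_pi (by positivity) (by linarith) (by linarith)
  have hsqrt3 : (1.7 : ℝ) < √3 := by
    nlinarith [sq_sqrt (show (0 : ℝ) ≤ 3 by norm_num), sqrt_nonneg 3]
  -- `sin x ≤ x` bounds the negative term by `c π² / 72`, at least `-70.45 / 72 > -1`
  have hsin : c * (π / 6) * (π / 12) ≤ c * (π / 6) * sin (π / 12) :=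
    mul_le_mul_of_nonpos_left (sin_le (by positivity)) (by nlinarith)
  have hcpi : -c * π ^ 2 < 70.45 := by
    nlinarith [mul_le_mul_of_nonneg_right (show -c ≤ 18 * π / 7 - 1 by linarith) (sq_nonneg π)]
  rw [hZeroCofactor, show π / 6 / 2 = π / 12 by ring, add_zero]
  nlinarith

theorem hZeroCofactor_pos_of_nonpos (hc : c < 0) (ha : π ≤ a) {t : ℝ} (ht : t ∈ Ioc (-π) 0) :
    0 < hZeroCofactor c a t := by
  have hcos : 0 < cos (t / 2) :=
    cos_pos_of_mem_Ioo ⟨by linarith [ht.1], by linarith [ht.2, pi_pos]⟩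
  have hsin : sin (t / 2) ≤ 0 := sin_nonpos_of_nonpos_of_neg_pi_le (by linarith [ht.2])
    (by linarith [ht.1, pi_pos])
  have hprod : 0 ≤ c * (t + a) * sin (t / 2) :=
    mul_nonneg_of_nonpos_of_nonpos (mul_nonpos_of_nonpos_of_nonneg hc.le (by linarith [ht.1])) hsin
  rw [hZeroCofactor]
  linarith

end hZeroCofactor

theorem exists_forall_hZero_eq_zero_iff_of_mem_Ioo_zero_pi {α : ℝ} (hα₁ : 1 ≤ α)
    (hα₂ : α ≤ 9 / 7) :
    ∃ ω₀ ∈ Ioo (π / 6) (π / 2), ∀ ω ∈ Ioo 0 π, hZero α ω = 0 ↔ ω = ω₀ := by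
  have hc : 1 - 2 * α * π ≤ 1 - 2 * π := by nlinarith [pi_pos]
  have hc₀ : 1 - 2 * α * π < 0 := by linarith [pi_gt_three]
  obtain ⟨ω₀, hω₀, hiff⟩ := (strictAntiOn_hZeroCofactor hc₀ le_rfl).exists_mem_Ioo_forall_eq_zero_iff
    (continuous_hZeroCofactor _ _).continuousOn (by positivity) (by linarith [pi_pos])
    (by linarith [pi_pos]) (hZeroCofactor_pi_div_six_pos hc₀.le (by nlinarith [pi_pos]))
    (hZeroCofactor_pi_div_two_neg hc le_rfl)
  refine ⟨ω₀, hω₀, fun ω hω => ?_⟩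
  have h := hZero_add_two_mul_nat_mul_pi_eq_zero_iff α 0 ⟨by linarith [hω.1, pi_pos], hω.2⟩
  simp only [Nat.cast_zero, mul_zero, zero_mul, add_zero] at h
  rw [h, hiff ω (Ioo_subset_Icc_self hω)]

theorem exists_forall_hZero_eq_zero_iff_of_mem_Ioo_odd_mul_pi {α : ℝ} (hα : 1 ≤ α) {k : ℕ}
    (hk : 1 ≤ k) :
    ∃ ω₀ ∈ Ioo (2 * (k : ℝ) * π) ((2 * k + 1 / 2) * π),
      ∀ ω ∈ Ioo ((2 * (k : ℝ) - 1) * π) ((2 * k + 1) * π), hZero α ω = 0 ↔ ω = ω₀ := by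
  have hc : 1 - 2 * α * π ≤ 1 - 2 * π := by nlinarith [pi_pos]
  have hc₀ : 1 - 2 * α * π < 0 := by linarith [pi_gt_three]
  have hk' : (1 : ℝ) ≤ k := by exact_mod_cast hk
  have ha : π ≤ 2 * k * π := by nlinarith [pi_pos]
  obtain ⟨t₀, ht₀, hiff⟩ :=
    (strictAntiOn_hZeroCofactor (a := 2 * k * π) hc₀ (by positivity)).exists_mem_Ioo_forall_eq_zero_iff
      (continuous_hZeroCofactor _ _).continuousOn le_rfl (by linarith [pi_pos])
      (by linarith [pi_pos]) (by rw [hZeroCofactor_zero]; norm_num)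
      (hZeroCofactor_pi_div_two_neg hc (by positivity))
  refine ⟨t₀ + 2 * k * π, ⟨by linarith [ht₀.1], by linarith [ht₀.2]⟩, fun ω hω => ?_⟩
  have ht : ω - 2 * k * π ∈ Ioo (-π) π := ⟨by linarith [hω.1], by linarith [hω.2]⟩
  have h := hZero_add_two_mul_nat_mul_pi_eq_zero_iff α k ht
  rw [sub_add_cancel] at h
  rw [h, ← sub_eq_iff_eq_add]
  rcases le_or_gt (ω - 2 * k * π) 0 with hle | hpos
  · exact iff_of_false (hZeroCofactor_pos_of_nonpos hc₀ ha ⟨ht.1, hle⟩).ne' (by linarith [ht₀.1])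
  · exact hiff _ ⟨hpos.le, ht.2.le⟩

/-- **Location of the positive zeros of `h`.**  For `α ∈ {1, 9/7}`:
(a) `h` has exactly one zero in `(0,π)`, lying in `[π/6, π/2]`;
(b) `h((2k−1)π) = 0` for every `k ≥ 1`;
(c) for every `k ≥ 1`, `h` has exactly one zero in `((2k−1)π, (2k+1)π)`, lying in
`[2kπ, (2k+½)π]`.  Consequently every positive zero of `h` is one of the above. -/
theorem hZero_positive_zeros (α : ℝ) (hα : α = 1 ∨ α = 9 / 7) :
    ((∃! ω : ℝ, ω ∈ Set.Ioo 0 π ∧ hZero α ω = 0) ∧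
      ∀ ω ∈ Set.Ioo 0 π, hZero α ω = 0 → ω ∈ Set.Icc (π / 6) (π / 2)) ∧
    (∀ k : ℕ, 1 ≤ k → hZero α ((2 * (k : ℝ) - 1) * π) = 0) ∧
    (∀ k : ℕ, 1 ≤ k →
      (∃! ω : ℝ, ω ∈ Set.Ioo ((2 * (k : ℝ) - 1) * π) ((2 * (k : ℝ) + 1) * π) ∧
        hZero α ω = 0) ∧
      ∀ ω ∈ Set.Ioo ((2 * (k : ℝ) - 1) * π) ((2 * (k : ℝ) + 1) * π), hZero α ω = 0 →
        ω ∈ Set.Icc (2 * (k : ℝ) * π) ((2 * (k : ℝ) + 1 / 2) * π)) ∧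
    (∀ ω : ℝ, 0 < ω → hZero α ω = 0 →
      ω ∈ Set.Ioo 0 π ∨ (∃ k : ℕ, 1 ≤ k ∧ ω = (2 * (k : ℝ) - 1) * π) ∨
        ∃ k : ℕ, 1 ≤ k ∧ ω ∈ Set.Ioo ((2 * (k : ℝ) - 1) * π) ((2 * (k : ℝ) + 1) * π)) := by
  have hα₁ : 1 ≤ α := by rcases hα with rfl | rfl <;> norm_num
  have hα₂ : α ≤ 9 / 7 := by rcases hα with rfl | rfl <;> norm_num
  refine ⟨?_, fun k _ => hZero_odd_mul_pi α k, fun k hk => ?_, fun ω hω _ => ?_⟩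
  · obtain ⟨ω₀, hω₀, hiff⟩ := exists_forall_hZero_eq_zero_iff_of_mem_Ioo_zero_pi hα₁ hα₂
    exact existsUnique_and_forall_mem_of_forall_iff
      ⟨by linarith [hω₀.1, pi_pos], by linarith [hω₀.2, pi_pos]⟩ (Ioo_subset_Icc_self hω₀) hiff
  · obtain ⟨ω₀, hω₀, hiff⟩ := exists_forall_hZero_eq_zero_iff_of_mem_Ioo_odd_mul_pi hα₁ hk
    exact existsUnique_and_forall_mem_of_forall_iff
      ⟨by linarith [hω₀.1, pi_pos], by linarith [hω₀.2, pi_pos]⟩ (Ioo_subset_Icc_self hω₀) hiff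
  · rcases lt_or_ge ω π with hlt | hge
    · exact Or.inl ⟨hω, hlt⟩
    obtain ⟨k, hk, hlow, hhigh⟩ := exists_odd_mul_pi_le_lt_odd_mul_pi hge
    rcases hlow.eq_or_lt with heq | hlt
    · exact Or.inr (Or.inl ⟨k, hk, heq.symm⟩)
    · exact Or.inr (Or.inr ⟨k, hk, hlt, hhigh⟩)
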